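/- The axiom scheme A1 is valid in all Nelsonian conditional models: for all formulas φ, ψ, χ, the strong equivalence ((φ □→ ψ) ∧ (φ □→ χ)) ⇔ (φ □→ (ψ ∧ χ)) is verified at every world of every Nelsonian conditional model, where α ⇔ β abbreviates ((α→β)∧(~β→~α)) ∧ ((β→α)∧(~α→~β)). -/

import Mathlib

inductive CForm : Type where
  | var : Nat → CForm
  | and : CForm → CForm → CForm
  | or  : CForm → CForm → CForm
  | neg : CForm → CForm
  | imp : CForm → CForm → CForm
  | cond : CForm → CForm → CForm

/-- A Nelsonian conditional model: a Nelsonian model together with a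
bi-set-indexed accessibility relation satisfying (c1) and (c2). -/
structure CNModel where
  W : Type
  le : W → W → Prop
  refl : ∀ w, le w w
  trans : ∀ {a b c}, le a b → le b c → le a c
  Vp : Nat → W → Prop
  Vn : Nat → W → Prop
  monoP : ∀ (n : Nat) {w v}, le w v → Vp n w → Vp n v
  monoN : ∀ (n : Nat) {w v}, le w v → Vn n w → Vn n v
  R : W → Set W × Set W → W → Prop
  c1 : ∀ (XY : Set W × Set W) {w w' v}, le w w' → R w XY v → ∃ v', R w' XY v' ∧ le v v'
  c2 : ∀ (XY : Set W × Set W) {w v v'}, R w XY v → le v v' → ∃ w', le w w' ∧ R w' XY v'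

/-- Verification (`true`) and falsification (`false`) in a Nelsonian conditional model. -/
def CNModel.sat (M : CNModel) : CForm → Bool → M.W → Prop
  | .var n, true, w => M.Vp n w
  | .var n, false, w => M.Vn n w
  | .and φ ψ, true, w => M.sat φ true w ∧ M.sat ψ true w
  | .and φ ψ, false, w => M.sat φ false w ∨ M.sat ψ false w
  | .or φ ψ, true, w => M.sat φ true w ∨ M.sat ψ true w
  | .or φ ψ, false, w => M.sat φ false w ∧ M.sat ψ false w
  | .neg φ, b, w => M.sat φ (!b) w
  | .imp φ ψ, true, w => ∀ v, M.le w v → M.sat φ true v → M.sat ψ true v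
  | .imp φ ψ, false, w => M.sat φ true w ∧ M.sat ψ false w
  | .cond φ ψ, true, w =>
      ∀ v u, M.le w v → M.R v ({x | M.sat φ true x}, {x | M.sat φ false x}) u →
        M.sat ψ true u
  | .cond φ ψ, false, w =>
      ∃ u, M.R w ({x | M.sat φ true x}, {x | M.sat φ false x}) u ∧ M.sat ψ false u

/-- N4CK-validity: verified at every world of every Nelsonian conditional model. -/
def CValid (φ : CForm) : Prop := ∀ (M : CNModel) (w : M.W), M.sat φ true w

/-- Strong implication for the conditional language. -/
def strImp (φ ψ : CForm) : CForm := .and (.imp φ ψ) (.imp (.neg ψ) (.neg φ))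

/-- Strong equivalence for the conditional language. -/
def strEquiv (φ ψ : CForm) : CForm := .and (strImp φ ψ) (strImp ψ φ)

theorem cValid_strEquiv_of_sat_iff {α β : CForm}
    (h : ∀ (M : CNModel) (b : Bool) (w : M.W), M.sat α b w ↔ M.sat β b w) :
    CValid (strEquiv α β) := fun M _ =>
  ⟨⟨fun v _ => (h M true v).1, fun v _ => (h M false v).2⟩,
    fun v _ => (h M true v).2, fun v _ => (h M false v).1⟩

theorem CNModel.sat_and_cond_iff_sat_cond_and (M : CNModel) (φ ψ χ : CForm) :
    ∀ (b : Bool) (w : M.W),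
      M.sat (.and (.cond φ ψ) (.cond φ χ)) b w ↔ M.sat (.cond φ (.and ψ χ)) b w
  | true, _ => by simp only [CNModel.sat, imp_and, forall_and]
  | false, _ => by simp only [CNModel.sat, and_or_left, exists_or]

theorem a1_valid (φ ψ χ : CForm) :
    CValid (strEquiv (.and (.cond φ ψ) (.cond φ χ)) (.cond φ (.and ψ χ))) :=
  cValid_strEquiv_of_sat_iff fun M => M.sat_and_cond_iff_sat_cond_and φ ψ χ
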